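/- Let f : B → D be a Grothendieck opfibration and g : C → D any functor between small categories, and let V be a bicomplete category. For the strict fibre product square with projections C ×_D B → B and C ×_D B → C, the base change natural transformation (pr_C)_! (pr_B)^* ⟹ g^* f_! is a natural isomorphism. -/

import Mathlib

/-!
Evaluated at `H : B ⥤ V` and `c : C`, the source of the base change map is the colimit of
`H ∘ pr_B` over `pr_C / c` and the target is the colimit of `H` over `f / g c`; the map is the
one induced by the comparison functor `pr_C / c ⥤ f / g c`, so it suffices that this functor is
final. For `k : f b ⟶ g c`, a cocartesian lift of `k` gives a distinguished object `z₀` of the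
category of structured arrows from `k` to the comparison functor, and any object `z` of it is
joined to `z₀` by a span whose apex comes from a cocartesian lift of the `B`-component of `z`.
-/

open CategoryTheory CategoryTheory.Limits
universe v w u

section BaseChange
variable {A B C D : Type u} [SmallCategory A] [SmallCategory B] [SmallCategory C] [SmallCategory D]
variable (V : Type v) [Category.{w} V] [HasColimitsOfSize.{u,u} V]

/-- The transformation `f^* ⋙ s^* ⟶ g^* ⋙ t^*` induced by `α : s ⋙ f ⟶ t ⋙ g`. -/
def restrictionSquare (s : A ⥤ B) (t : A ⥤ C) (f : B ⥤ D) (g : C ⥤ D) (α : s ⋙ f ⟶ t ⋙ g) :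
    ((Functor.whiskeringLeft B D V).obj f ⋙ (Functor.whiskeringLeft A B V).obj s : (D ⥤ V) ⥤ (A ⥤ V)) ⟶
      (Functor.whiskeringLeft C D V).obj g ⋙ (Functor.whiskeringLeft A C V).obj t where
  app H := Functor.whiskerRight α H
  naturality := by intros; ext; simp

/-- The base change natural transformation `t_! s^* ⟶ g^* f_!` of a lax square,
defined as the composite `t_! s^* ⟶ t_! s^* f^* f_! ⟶ t_! t^* g^* f_! ⟶ g^* f_!`
using the unit of `f_! ⊣ f^*` and the counit of `t_! ⊣ t^*`. -/
noncomputable def baseChange (s : A ⥤ B) (t : A ⥤ C) (f : B ⥤ D) (g : C ⥤ D)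
    (α : s ⋙ f ⟶ t ⋙ g) :
    ((Functor.whiskeringLeft A B V).obj s ⋙ t.lan : (B ⥤ V) ⥤ (C ⥤ V)) ⟶
      f.lan ⋙ (Functor.whiskeringLeft C D V).obj g :=
  Functor.whiskerRight (f.lanAdjunction V).unit ((Functor.whiskeringLeft A B V).obj s ⋙ t.lan) ≫
    Functor.whiskerRight (Functor.whiskerLeft f.lan (restrictionSquare V s t f g α)) t.lan ≫
    Functor.whiskerLeft (f.lan ⋙ (Functor.whiskeringLeft C D V).obj g) (t.lanAdjunction V).counit

end BaseChange

section
variable {B C D : Type u} [SmallCategory B] [SmallCategory C] [SmallCategory D]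

/-- An arrow `φ` of `X` is cocartesian for `p : X ⥤ Y` if any other arrow out of its source
whose image factors through `p(φ)` factors uniquely through `φ`, with prescribed image. -/
def IsCocartesianArrow {X Y : Type u} [SmallCategory X] [SmallCategory Y]
    (p : X ⥤ Y) {x y : X} (φ : x ⟶ y) : Prop :=
  ∀ ⦃z : X⦄ (φ' : x ⟶ z) (ψ : p.obj y ⟶ p.obj z), p.map φ' = p.map φ ≫ ψ →
    ∃! χ : y ⟶ z, p.map χ = ψ ∧ φ ≫ χ = φ'

/-- A functor is a Grothendieck opfibration if every arrow of the base with a given lift of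
its source admits a cocartesian lift. -/
def IsOpfibration {X Y : Type u} [SmallCategory X] [SmallCategory Y] (p : X ⥤ Y) : Prop :=
  ∀ ⦃x : X⦄ ⦃d : Y⦄ (ψ : p.obj x ⟶ d), ∃ (y : X) (φ : x ⟶ y) (e : p.obj y = d),
    p.map φ ≫ eqToHom e = ψ ∧ IsCocartesianArrow p φ

/-- The strict fibre product `C ×_D B` of `g : C ⥤ D` and `f : B ⥤ D`. -/
structure CatPullback (g : C ⥤ D) (f : B ⥤ D) : Type u where
  left : C
  right : B
  eq : g.obj left = f.obj right

variable (g : C ⥤ D) (f : B ⥤ D)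

instance : Category.{u} (CatPullback g f) where
  Hom x y := {φ : (x.left ⟶ y.left) × (x.right ⟶ y.right) //
    g.map φ.1 = eqToHom x.eq ≫ f.map φ.2 ≫ eqToHom y.eq.symm}
  id x := ⟨(𝟙 _, 𝟙 _), by simp⟩
  comp φ ψ := ⟨(φ.1.1 ≫ ψ.1.1, φ.1.2 ≫ ψ.1.2), by simp [φ.2, ψ.2]⟩
  id_comp φ := by apply Subtype.ext; simp
  comp_id φ := by apply Subtype.ext; simp
  assoc φ ψ χ := by apply Subtype.ext; simp

/-- The projection `C ×_D B ⥤ C`. -/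
def CatPullback.prC : CatPullback g f ⥤ C where
  obj x := x.left
  map φ := φ.1.1
  map_id _ := rfl
  map_comp _ _ := rfl

/-- The projection `C ×_D B ⥤ B`. -/
def CatPullback.prB : CatPullback g f ⥤ B where
  obj x := x.right
  map φ := φ.1.2
  map_id _ := rfl
  map_comp _ _ := rfl

/-- The (identity-like) natural transformation of the strict pullback square. -/
def CatPullback.square : CatPullback.prB g f ⋙ f ⟶ CatPullback.prC g f ⋙ g where
  app x := eqToHom x.eq.symm
  naturality x y φ := by
    dsimp [CatPullback.prB, CatPullback.prC]
    rw [φ.2]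
    simp

lemma CategoryTheory.Functor.lanUnit_app_app_lan_map_app {X Y H : Type*} [Category X]
    [Category Y] [Category H] (L : X ⥤ Y) [∀ F : X ⥤ H, L.HasLeftKanExtension F] {F G : X ⥤ H}
    (β : F ⟶ G) (x : X) :
    (L.lanUnit.app F).app x ≫ (L.lan.map β).app (L.obj x) = β.app x ≫ (L.lanUnit.app G).app x :=
  (congr_app (L.lanUnit.naturality β) x).symm

section BaseChangeColimit

variable {A : Type u} [SmallCategory A] (V : Type v) [Category.{w} V] [HasColimitsOfSize.{u,u} V]
variable (s : A ⥤ B) (t : A ⥤ C) {g f} (α : s ⋙ f ⟶ t ⋙ g)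

lemma lanUnit_app_app_baseChange_app_app (H : B ⥤ V) (a : A) :
    (t.lanUnit.app (s ⋙ H)).app a ≫ ((baseChange V s t f g α).app H).app (t.obj a) =
      (f.lanUnit.app H).app (s.obj a) ≫ (f.lan.obj H).map (α.app a) := by
  dsimp [baseChange, restrictionSquare]
  rw [Functor.lanAdjunction_unit, reassoc_of% Functor.lanUnit_app_app_lan_map_app,
    reassoc_of% Functor.lanUnit_app_app_lan_map_app,
    Functor.lanUnit_app_app_lanAdjunction_counit_app_app]
  simp

lemma lanUnit_app_app_map_baseChange_app_app (H : B ⥤ V) (c : C) (j : CostructuredArrow t c) :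
    (t.lanUnit.app (s ⋙ H)).app j.left ≫ (t.lan.obj (s ⋙ H)).map j.hom ≫
        ((baseChange V s t f g α).app H).app c =
      (f.lanUnit.app H).app (s.obj j.left) ≫
        (f.lan.obj H).map ((CostructuredArrow.map₂ α (𝟙 (g.obj c))).obj j).hom := by
  erw [((baseChange V s t f g α).app H).naturality j.hom,
    reassoc_of% lanUnit_app_app_baseChange_app_app]
  simp

lemma isIso_baseChange_app_app_of_final (H : B ⥤ V) (c : C)
    [(CostructuredArrow.map₂ α (𝟙 (g.obj c))).Final] :
    IsIso (((baseChange V s t f g α).app H).app c) := by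
  -- `e₁` is retyped through the defeq `proj t c ⋙ s ⋙ H = map₂ α _ ⋙ proj f _ ⋙ H`,
  -- so that it composes with `colimit.pre`.
  let e₁ : ((t.lan.obj (s ⋙ H)).obj c) ≅
      colimit (CostructuredArrow.map₂ α (𝟙 (g.obj c)) ⋙ CostructuredArrow.proj f (g.obj c) ⋙ H) :=
    t.leftKanExtensionObjIsoColimit (s ⋙ H) c
  let e₂ : (f.lan.obj H).obj (g.obj c) ≅ colimit (CostructuredArrow.proj f (g.obj c) ⋙ H) :=
    f.leftKanExtensionObjIsoColimit H (g.obj c)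
  have h : ((baseChange V s t f g α).app H).app c =
      e₁.hom ≫ colimit.pre _ (CostructuredArrow.map₂ α (𝟙 (g.obj c))) ≫ e₂.inv := by
    rw [← Iso.inv_comp_eq]
    refine colimit.hom_ext fun j => ?_
    rw [colimit.ι_pre_assoc]
    exact (t.ι_leftKanExtensionObjIsoColimit_inv_assoc (s ⋙ H) c j _).trans
      ((lanUnit_app_app_map_baseChange_app_app V s t α H c j).trans
        (f.ι_leftKanExtensionObjIsoColimit_inv H (g.obj c)
          ((CostructuredArrow.map₂ α (𝟙 (g.obj c))).obj j)).symm)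
  rw [h]
  infer_instance

theorem isIso_baseChange_of_final (hfin : ∀ c, (CostructuredArrow.map₂ α (𝟙 (g.obj c))).Final) :
    IsIso (baseChange V s t f g α) := by
  have (H : B ⥤ V) (c : C) : IsIso (((baseChange V s t f g α).app H).app c) := by
    have := hfin c
    exact isIso_baseChange_app_app_of_final V s t α H c
  have (H : B ⥤ V) : IsIso ((baseChange V s t f g α).app H) := NatIso.isIso_of_isIso_app _
  exact NatIso.isIso_of_isIso_app _

end BaseChangeColimit

namespace CatPullback

variable {g f}

lemma exists_hom_of_isCocartesianArrow {b : B} {x y : CatPullback g f} {β₁ : b ⟶ x.right}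
    (hβ₁ : IsCocartesianArrow f β₁) (β₂ : b ⟶ y.right) (v : x.left ⟶ y.left)
    (h : f.map β₂ ≫ eqToHom y.eq.symm = f.map β₁ ≫ eqToHom x.eq.symm ≫ g.map v) :
    ∃ m : x ⟶ y, m.1.1 = v ∧ β₁ ≫ m.1.2 = β₂ := by
  obtain ⟨χ, ⟨hχ, hβ⟩, -⟩ := hβ₁ β₂ (eqToHom x.eq.symm ≫ g.map v ≫ eqToHom y.eq) (by
    rw [← reassoc_of% h]; simp)
  exact ⟨⟨(v, χ), by simp [hχ]⟩, rfl, hβ⟩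

variable {c : C} (k : CostructuredArrow f (g.obj c))

def structuredArrowMk (x : CatPullback g f) (u : x.left ⟶ c) (β : k.left ⟶ x.right)
    (hβ : f.map β ≫ eqToHom x.eq.symm ≫ g.map u = k.hom) :
    StructuredArrow k (CostructuredArrow.map₂ (square g f) (𝟙 (g.obj c))) :=
  StructuredArrow.mk (Y := CostructuredArrow.mk (Y := x) u)
    (CostructuredArrow.homMk β (by simp [square, prB]; exact hβ))

lemma exists_eq_structuredArrowMk
    (z : StructuredArrow k (CostructuredArrow.map₂ (square g f) (𝟙 (g.obj c)))) :
    ∃ x u β hβ, z = structuredArrowMk k x u β hβ := by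
  have hz := CostructuredArrow.w z.hom
  simp only [CostructuredArrow.map₂_obj_hom, square, prB, Category.comp_id] at hz
  exact ⟨z.right.left, z.right.hom, z.hom.left, hz, rfl⟩

variable {k}

lemma nonempty_structuredArrowMk_hom {x y : CatPullback g f} {u₁ : x.left ⟶ c} {u₂ : y.left ⟶ c}
    {β₁ : k.left ⟶ x.right} {β₂ : k.left ⟶ y.right} {h₁ h₂} (hβ₁ : IsCocartesianArrow f β₁)
    (v : x.left ⟶ y.left) (hv : v ≫ u₂ = u₁)
    (h : f.map β₂ ≫ eqToHom y.eq.symm = f.map β₁ ≫ eqToHom x.eq.symm ≫ g.map v) :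
    Nonempty (structuredArrowMk k x u₁ β₁ h₁ ⟶ structuredArrowMk k y u₂ β₂ h₂) := by
  obtain ⟨m, rfl, hm⟩ := exists_hom_of_isCocartesianArrow hβ₁ β₂ v h
  exact ⟨StructuredArrow.homMk (CostructuredArrow.homMk m hv) (CostructuredArrow.hom_ext _ _ hm)⟩

variable (g) in
lemma final_map₂_square (hf : IsOpfibration f) (c : C) :
    (CostructuredArrow.map₂ (square g f) (𝟙 (g.obj c))).Final := by
  refine ⟨fun k => ?_⟩
  obtain ⟨y₀, Φ, E, hΦ, -⟩ := hf k.hom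
  let z₀ := structuredArrowMk k ⟨c, y₀, E.symm⟩ (𝟙 c) Φ (by simpa using hΦ)
  have toZ₀ : ∀ z, Zigzag z z₀ := by
    intro z
    obtain ⟨x, u, β, hβ, rfl⟩ := exists_eq_structuredArrowMk k z
    obtain ⟨y, φ, e, hφ, hφc⟩ := hf (f.map β ≫ eqToHom x.eq.symm)
    have hw : f.map φ ≫ eqToHom e ≫ g.map u = k.hom := by rw [reassoc_of% hφ, hβ]
    let w := structuredArrowMk k ⟨x.left, y, e.symm⟩ u φ hw
    obtain ⟨toZ⟩ : Nonempty (w ⟶ structuredArrowMk k x u β hβ) :=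
      nonempty_structuredArrowMk_hom hφc (𝟙 _) (Category.id_comp _) (by simpa using hφ.symm)
    obtain ⟨toZ₀⟩ : Nonempty (w ⟶ z₀) :=
      nonempty_structuredArrowMk_hom hφc u (Category.comp_id _) (hΦ.trans hw.symm)
    exact Zigzag.of_inv_hom toZ toZ₀
  have : Nonempty (StructuredArrow k (CostructuredArrow.map₂ (square g f) (𝟙 (g.obj c)))) := ⟨z₀⟩
  exact zigzag_isConnected fun z z' => (toZ₀ z).trans (toZ₀ z').symm

end CatPullback

theorem baseChange_pullback_opfibration_isIso
    (hf : IsOpfibration f)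
    (V : Type v) [Category.{w} V] [HasColimitsOfSize.{u,u} V] :
    IsIso (baseChange V (CatPullback.prB g f) (CatPullback.prC g f) f g
      (CatPullback.square g f)) :=
  isIso_baseChange_of_final V _ _ _ (CatPullback.final_map₂_square g hf)

end
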